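/- Let P = (E, ρ) be a (q,m)-polymatroid of rank K = ρ(E). Then d_r(P) < d_{r+m}(P) for any positive integer r with r + m ≤ K, and d_s(P*) < d_{s+m}(P*) for any positive integer s with s + m ≤ mn − K. -/

import Mathlib

set_option linter.unusedSectionVars false

open Module Matrix

variable {F : Type*} [Field F] [Fintype F] {n : ℕ}

/-- The orthogonal complement of a subspace of `𝔽_q^n` with respect to the standard dot product. -/
def perp (X : Submodule F (Fin n → F)) : Submodule F (Fin n → F) where
  carrier := {x | ∀ y ∈ X, dotProduct x y = 0}
  add_mem' := fun {a b} ha hb y hy => by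
    rw [Set.mem_setOf_eq] at *
    rw [add_dotProduct, ha y hy, hb y hy, add_zero]
  zero_mem' := fun y hy => zero_dotProduct y
  smul_mem' := fun c a ha y hy => by
    rw [Set.mem_setOf_eq] at *
    rw [smul_dotProduct, ha y hy, smul_zero]

/-- The dual rank function `ρ*(X) = ρ(X^⊥) + m·dim X − ρ(E)`. -/
noncomputable def dualRho (m : ℕ) (rho : Submodule F (Fin n → F) → ℤ) (X : Submodule F (Fin n → F)) : ℤ :=
  rho (perp X) + (m : ℤ) * (finrank F X : ℤ) - rho ⊤

/-- The nullity function `ν(X) = m·dim X − ρ(X)`. -/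
noncomputable def nullity (m : ℕ) (rho : Submodule F (Fin n → F) → ℤ) (X : Submodule F (Fin n → F)) : ℤ :=
  (m : ℤ) * (finrank F X : ℤ) - rho X

/-- The conullity function `ν*(X) = ρ(E) − ρ(X^⊥)`. -/
def coNull (rho : Submodule F (Fin n → F) → ℤ) (X : Submodule F (Fin n → F)) : ℤ :=
  rho ⊤ - rho (perp X)

/-- The `r`-th generalized weight `d_r = min{dim X : ν*(X) ≥ r}`. -/
noncomputable def genW (rho : Submodule F (Fin n → F) → ℤ) (r : ℤ) : ℕ :=
  sInf {d : ℕ | ∃ X : Submodule F (Fin n → F), finrank F X = d ∧ r ≤ coNull rho X}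

/-- `h(x) = max{ν(X) : dim X = x}`. -/
noncomputable def hFun (m : ℕ) (rho : Submodule F (Fin n → F) → ℤ) (x : ℕ) : ℤ :=
  sSup {v : ℤ | ∃ X : Submodule F (Fin n → F), finrank F X = x ∧ v = nullity m rho X}

/-- `h*(x) = max{ν*(X) : dim X = x}`. -/
noncomputable def hStar (rho : Submodule F (Fin n → F) → ℤ) (x : ℕ) : ℤ :=
  sSup {v : ℤ | ∃ X : Submodule F (Fin n → F), finrank F X = x ∧ v = coNull rho X}

/-- A `(q,m)`-polymatroid on `E = 𝔽_q^n`. -/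
structure QMPolymatroid (F : Type*) [Field F] [Fintype F] (n m : ℕ) where
  rho : Submodule F (Fin n → F) → ℤ
  rho_nonneg : ∀ X, 0 ≤ rho X
  rho_le : ∀ X, rho X ≤ (m : ℤ) * (finrank F X : ℤ)
  rho_mono : ∀ ⦃X Y⦄, X ≤ Y → rho X ≤ rho Y
  rho_submodular : ∀ X Y, rho (X ⊔ Y) + rho (X ⊓ Y) ≤ rho X + rho Y

/-- A `(q,m)`-demi-polymatroid on `E = 𝔽_q^n`. -/
structure QMDemiPolymatroid (F : Type*) [Field F] [Fintype F] (n m : ℕ) where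
  rho : Submodule F (Fin n → F) → ℤ
  rho_nonneg : ∀ X, 0 ≤ rho X
  rho_le : ∀ X, rho X ≤ (m : ℤ) * (finrank F X : ℤ)
  rho_mono : ∀ ⦃X Y⦄, X ≤ Y → rho X ≤ rho Y
  dual_nonneg : ∀ X, 0 ≤ dualRho m rho X
  dual_le : ∀ X, dualRho m rho X ≤ (m : ℤ) * (finrank F X : ℤ)
  dual_mono : ∀ ⦃X Y⦄, X ≤ Y → dualRho m rho X ≤ dualRho m rho Y

section Codes

variable {m : ℕ}

/-- The row space of a matrix. -/
def rowSpace (A : Matrix (Fin m) (Fin n) F) : Submodule F (Fin n → F) :=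
  Submodule.span F (Set.range A)

theorem rowSpace_le_iff (A : Matrix (Fin m) (Fin n) F) (X : Submodule F (Fin n → F)) :
    rowSpace A ≤ X ↔ ∀ i, A i ∈ X := by
  rw [rowSpace, Submodule.span_le]; exact Set.range_subset_iff

/-- Matrices whose row space is contained in `X`. -/
def supportedOn (m : ℕ) (X : Submodule F (Fin n → F)) :
    Submodule F (Matrix (Fin m) (Fin n) F) where
  carrier := {A | rowSpace A ≤ X}
  add_mem' := fun {A B} hA hB => by
    rw [Set.mem_setOf_eq, rowSpace_le_iff] at *
    exact fun i => X.add_mem (hA i) (hB i)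
  zero_mem' := by
    rw [Set.mem_setOf_eq, rowSpace_le_iff]
    exact fun i => X.zero_mem
  smul_mem' := fun c A hA => by
    rw [Set.mem_setOf_eq, rowSpace_le_iff] at *
    exact fun i => X.smul_mem c (hA i)

/-- `C(X)`: the subspace of a Delsarte code `C` of matrices whose row space lies in `X`. -/
def subcode (C : Submodule F (Matrix (Fin m) (Fin n) F)) (X : Submodule F (Fin n → F)) :
    Submodule F (Matrix (Fin m) (Fin n) F) :=
  C ⊓ supportedOn m X

/-- The rank function `ρ_C(X) = dim C − dim C(X^⊥)` of a Delsarte code. -/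
noncomputable def rhoC (C : Submodule F (Matrix (Fin m) (Fin n) F))
    (X : Submodule F (Fin n → F)) : ℤ :=
  (finrank F C : ℤ) - (finrank F (subcode C (perp X)) : ℤ)

/-- The generalized weight `d_r(C) = min{dim X : dim C(X) ≥ r}` of a Delsarte code. -/
noncomputable def codeWeight (C : Submodule F (Matrix (Fin m) (Fin n) F)) (r : ℤ) : ℕ :=
  sInf {d : ℕ | ∃ X : Submodule F (Fin n → F),
    finrank F X = d ∧ r ≤ (finrank F (subcode C X) : ℤ)}

/-- The trace dual of a Delsarte code. -/
def traceDual (C : Submodule F (Matrix (Fin m) (Fin n) F)) :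
    Submodule F (Matrix (Fin m) (Fin n) F) where
  carrier := {N | ∀ M ∈ C, Matrix.trace (M * Nᵀ) = 0}
  add_mem' := fun {N₁ N₂} h1 h2 M hM => by
    rw [Matrix.transpose_add, Matrix.mul_add, Matrix.trace_add, h1 M hM, h2 M hM, add_zero]
  zero_mem' := fun M hM => by simp
  smul_mem' := fun c N hN M hM => by
    rw [Matrix.transpose_smul, Matrix.mul_smul, Matrix.trace_smul, hN M hM, smul_zero]

/-- The transposed code `Cᵀ = {Mᵗ : M ∈ C}` of a code of square matrices. -/
def transposeCode (C : Submodule F (Matrix (Fin n) (Fin n) F)) :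
    Submodule F (Matrix (Fin n) (Fin n) F) where
  carrier := {A | Aᵀ ∈ C}
  add_mem' := fun {A B} hA hB => by
    rw [Set.mem_setOf_eq, Matrix.transpose_add]; exact C.add_mem hA hB
  zero_mem' := by
    rw [Set.mem_setOf_eq, Matrix.transpose_zero]; exact C.zero_mem
  smul_mem' := fun c A hA => by
    rw [Set.mem_setOf_eq, Matrix.transpose_smul]; exact C.smul_mem c hA

/-- The maximum rank of a matrix in a subspace of matrices. -/
noncomputable def maxrank (A : Submodule F (Matrix (Fin m) (Fin n) F)) : ℕ :=
  sSup {r : ℕ | ∃ M ∈ A, M.rank = r}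

/-- An optimal anticode: a subspace `𝒜` of `𝕄` with `dim 𝒜 = m · maxrank 𝒜`. -/
def IsOptimalAnticode (A : Submodule F (Matrix (Fin m) (Fin n) F)) : Prop :=
  finrank F A = m * maxrank A

/-- Ravagnani's generalized weight `a_r(C)`. -/
noncomputable def aWeight (C : Submodule F (Matrix (Fin m) (Fin n) F)) (r : ℤ) : ℕ :=
  (sInf {d : ℕ | ∃ A : Submodule F (Matrix (Fin m) (Fin n) F),
    IsOptimalAnticode A ∧ finrank F A = d ∧ r ≤ (finrank F (A ⊓ C : Submodule F _) : ℤ)}) / m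

end Codes

/-!
Take `X` of dimension `d_{r+m}` with `ν*(X) ≥ r + m`. Enlarging `X^⊥` by a vector outside it
yields `Y^⊥` with `dim Y < dim X`, and `ν*(Y) ≥ r` as soon as the rank function grows by at most
`m · dim B` when a subspace `B` is joined to its argument. For `ρ` this is submodularity together
with `ρ(B) ≤ m · dim B`; for `ρ*` it needs only the monotonicity of `ρ`.
-/

open Submodule

theorem perp_eq_comap_dualAnnihilator (X : Submodule F (Fin n → F)) :
    perp X = X.dualAnnihilator.comap (dotProductEquiv F (Fin n)).toLinearMap := by
  ext x
  simp [perp, Submodule.mem_dualAnnihilator]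

theorem finrank_perp_add_finrank (X : Submodule F (Fin n → F)) :
    finrank F (perp X) + finrank F X = n := by
  rw [perp_eq_comap_dualAnnihilator, comap_equiv_eq_map_symm,
    LinearEquiv.finrank_map_eq, add_comm, Subspace.finrank_add_finrank_dualAnnihilator_eq,
    finrank_fin_fun]

theorem perp_anti {X Y : Submodule F (Fin n → F)} (h : X ≤ Y) : perp Y ≤ perp X :=
  fun _ hx y hy => hx y (h hy)

theorem perp_perp (X : Submodule F (Fin n → F)) : perp (perp X) = X := by
  have hle : X ≤ perp (perp X) := fun x hx y hy => dotProduct_comm x y ▸ hy x hx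
  refine (eq_of_le_of_finrank_le hle ?_).symm
  have := finrank_perp_add_finrank X
  have := finrank_perp_add_finrank (perp X)
  omega

theorem perp_bot : perp (⊥ : Submodule F (Fin n → F)) = ⊤ :=
  eq_top_of_finrank_eq <| by simpa using finrank_perp_add_finrank (⊥ : Submodule F (Fin n → F))

theorem perp_top : perp (⊤ : Submodule F (Fin n → F)) = ⊥ := by
  rw [← perp_bot, perp_perp]

theorem dualRho_bot (m : ℕ) (rho : Submodule F (Fin n → F) → ℤ) : dualRho m rho ⊥ = 0 := by
  simp [dualRho, perp_bot]

theorem genW_le_finrank {f : Submodule F (Fin n → F) → ℤ} {r : ℤ} {X : Submodule F (Fin n → F)}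
    (hX : r ≤ coNull f X) : genW f r ≤ finrank F X :=
  Nat.sInf_le ⟨X, rfl, hX⟩

theorem exists_finrank_eq_genW {f : Submodule F (Fin n → F) → ℤ} {r : ℤ}
    (hr : r ≤ coNull f ⊤) : ∃ X : Submodule F (Fin n → F), finrank F X = genW f r ∧ r ≤ coNull f X :=
  Nat.sInf_mem (s := {d | ∃ X : Submodule F (Fin n → F), finrank F X = d ∧ r ≤ coNull f X})
    ⟨_, ⊤, rfl, hr⟩

theorem exists_finrank_lt_coNull_ge (m : ℕ) {f : Submodule F (Fin n → F) → ℤ}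
    (hgrowth : ∀ A B, f (A ⊔ B) ≤ f A + m * finrank F B)
    {r : ℤ} {X : Submodule F (Fin n → F)} (hX : X ≠ ⊥) (hrX : r + m ≤ coNull f X) :
    ∃ Y : Submodule F (Fin n → F), finrank F Y < finrank F X ∧ r ≤ coNull f Y := by
  have hperp_lt : perp X < ⊤ := by
    rw [lt_top_iff_ne_top]
    intro h
    exact hX (by rw [← perp_perp X, h, perp_top])
  obtain ⟨v, -, hv⟩ := SetLike.exists_of_lt hperp_lt
  have hv0 : v ≠ 0 := fun h => hv (h ▸ zero_mem _)
  set W := perp X ⊔ F ∙ v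
  have hW_lt : perp X < W :=
    lt_of_le_of_ne le_sup_left fun h => hv (h ▸ mem_sup_right (mem_span_singleton_self v))
  refine ⟨perp W, ?_, ?_⟩
  · have := finrank_lt_finrank_of_lt hW_lt
    have := finrank_perp_add_finrank X
    have := finrank_perp_add_finrank W
    omega
  · have hfW : f W ≤ f (perp X) + m := by
      simpa [finrank_span_singleton hv0] using hgrowth (perp X) (F ∙ v)
    rw [coNull] at hrX ⊢
    rw [perp_perp]
    omega

theorem genW_lt_genW_add (m : ℕ) {f : Submodule F (Fin n → F) → ℤ} (hbot : f ⊥ = 0)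
    (hgrowth : ∀ A B, f (A ⊔ B) ≤ f A + m * finrank F B)
    {r : ℤ} (hr : 1 ≤ r) (hrm : r + m ≤ f ⊤) :
    genW f r < genW f (r + m) := by
  obtain ⟨X, hXdim, hXr⟩ := exists_finrank_eq_genW (f := f) (r := r + m)
    (by rwa [coNull, perp_top, hbot, sub_zero])
  have hX : X ≠ ⊥ := by
    rintro rfl
    rw [coNull, perp_bot, sub_self] at hXr
    omega
  obtain ⟨Y, hYX, hYr⟩ := exists_finrank_lt_coNull_ge m hgrowth hX hXr
  exact hXdim ▸ (genW_le_finrank hYr).trans_lt hYX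

section Polymatroid

variable {m : ℕ}

theorem QMPolymatroid.rho_bot (P : QMPolymatroid F n m) : P.rho ⊥ = 0 :=
  le_antisymm (by simpa using P.rho_le ⊥) (P.rho_nonneg ⊥)

theorem QMPolymatroid.rho_sup_le (P : QMPolymatroid F n m) (A B : Submodule F (Fin n → F)) :
    P.rho (A ⊔ B) ≤ P.rho A + m * finrank F B := by
  linarith [P.rho_submodular A B, P.rho_nonneg (A ⊓ B), P.rho_le B]

theorem QMPolymatroid.dualRho_sup_le (P : QMPolymatroid F n m) (A B : Submodule F (Fin n → F)) :
    dualRho m P.rho (A ⊔ B) ≤ dualRho m P.rho A + m * finrank F B := by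
  have hperp : P.rho (perp (A ⊔ B)) ≤ P.rho (perp A) := P.rho_mono (perp_anti le_sup_left)
  have hdim : (finrank F ↥(A ⊔ B) : ℤ) ≤ finrank F A + finrank F B := by
    exact_mod_cast finrank_add_le_finrank_add_finrank A B
  unfold dualRho
  nlinarith [Int.natCast_nonneg m]

theorem QMPolymatroid.dualRho_top (P : QMPolymatroid F n m) :
    dualRho m P.rho ⊤ = m * n - P.rho ⊤ := by
  simp [dualRho, perp_top, P.rho_bot]

end Polymatroid

/-- `d_r(P) < d_{r+m}(P)` whenever `r + m ≤ K`, and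
`d_s(P*) < d_{s+m}(P*)` whenever `s + m ≤ mn − K`. -/
theorem genW_strict_mono_m {F : Type*} [Field F] [Fintype F] {n m : ℕ}
    (P : QMPolymatroid F n m) :
    (∀ r : ℤ, 1 ≤ r → r + (m : ℤ) ≤ P.rho ⊤ →
      genW P.rho r < genW P.rho (r + (m : ℤ))) ∧
    (∀ s : ℤ, 1 ≤ s → s + (m : ℤ) ≤ (m : ℤ) * (n : ℤ) - P.rho ⊤ →
      genW (dualRho m P.rho) s < genW (dualRho m P.rho) (s + (m : ℤ))) :=
  ⟨fun _ hr hrm => genW_lt_genW_add m P.rho_bot P.rho_sup_le hr hrm,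
    fun _ hs hsm => genW_lt_genW_add m (dualRho_bot m P.rho) P.dualRho_sup_le hs
      (P.dualRho_top ▸ hsm)⟩
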